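/- Let q > 1 be a real number, k ≥ 0 an integer, and 0 < u < 1/q. Define the transform Gf(u) = (u^{-2} - q) ∫_0^∞ e^{-(qu + 1/u)t} e^{(q+1)t} f(t) dt. Then applying G to the function f(t) = e^{-(q+1)t} q^{-k/2} I_k(2√q t) yields Gf(u) = u^{k-1}. -/

import Mathlib

/-!
Expanding `I_k` in its power series and integrating termwise against `e^{-st}`, where
`s = c²u + 1/u` and `c = √q`, turns the integral into `c^k / s^(k+1) · S_k(z)` with
`S_k(z) = ∑ₙ C(2n+k, n) zⁿ` and `z = x/(1+x)²`, `x = c²u² < 1`.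
Pascal's rule gives the recurrence `z S_{k+2} = S_{k+1} - S_k`, whose characteristic roots are
`1 + x` and `(1 + x)/x > 2`; since `S_k = O(2^k)`, only the first survives, so
`S_k = (1 + x)^k S_0`. Finally `C(2n+2, n+1) = 2 C(2n+1, n)` gives `S_0 = 1 + 2z S_1`,
which pins down `S_0 = (1 + x)/(1 - x)`, and everything collapses to `u^(k-1)`.
-/

/-- Modified Bessel function of the first kind of integer order `k ≥ 0`,
defined by its power series. -/
noncomputable def besselI (k : ℕ) (t : ℝ) : ℝ :=
  ∑' n : ℕ, (t / 2) ^ (2 * n + k) / (n.factorial * (n + k).factorial)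

/-- The `G`-transform `Gf(u) = (u⁻² - q) ∫_0^∞ e^{-(qu + 1/u)t} e^{(q+1)t} f(t) dt`. -/
noncomputable def Gtransform (q : ℝ) (f : ℝ → ℝ) (u : ℝ) : ℝ :=
  (u ^ (-2 : ℤ) - q) *
    ∫ t in Set.Ioi (0:ℝ), Real.exp (-(q * u + 1 / u) * t) * Real.exp ((q + 1) * t) * f t

open Filter MeasureTheory Real Set
open scoped Nat Topology

theorem eq_pow_mul_of_linear_recurrence {a : ℕ → ℝ} {r R b C : ℝ}
    (hb : 0 ≤ b) (hbR : b < R)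
    (hrec : ∀ k, a (k + 2) = (r + R) * a (k + 1) - r * R * a k)
    (hbound : ∀ k, |a k| ≤ C * b ^ k) (k : ℕ) : a k = r ^ k * a 0 := by
  set d : ℕ → ℝ := fun k => a (k + 1) - r * a k
  have hR : 0 < R := hb.trans_lt hbR
  have hd : ∀ k, d k = R ^ k * d 0 := by
    intro k
    induction k with
    | zero => simp
    | succ k ih =>
      rw [pow_succ, mul_right_comm, ← ih]
      simp only [d, hrec]
      ring
  have hd_le : ∀ k, |d 0| ≤ C * (b + |r|) * (b / R) ^ k := by
    intro k
    have hdk : |d k| ≤ C * (b + |r|) * b ^ k := by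
      calc |d k| ≤ |a (k + 1)| + |r| * |a k| := by
            simpa only [abs_mul] using abs_sub (a (k + 1)) (r * a k)
        _ ≤ C * b ^ (k + 1) + |r| * (C * b ^ k) := by gcongr <;> exact hbound _
        _ = C * (b + |r|) * b ^ k := by ring
    rw [hd, abs_mul, abs_of_pos (pow_pos hR k)] at hdk
    rw [div_pow, ← mul_div_assoc, le_div_iff₀ (pow_pos hR k)]
    linarith
  have hd0 : d 0 = 0 := by
    have hlim : Tendsto (fun k => C * (b + |r|) * (b / R) ^ k) atTop (𝓝 0) := by
      simpa using (tendsto_pow_atTop_nhds_zero_of_lt_one (div_nonneg hb hR.le)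
        ((div_lt_one hR).2 hbR)).const_mul (C * (b + |r|))
    exact abs_nonpos_iff.1 (ge_of_tendsto' hlim hd_le)
  induction k with
  | zero => simp
  | succ k ih =>
    have : d k = 0 := by rw [hd, hd0, mul_zero]
    simp only [d, sub_eq_zero] at this
    rw [this, ih, pow_succ]
    ring

noncomputable def shiftedCentralBinomSeries (k : ℕ) (z : ℝ) : ℝ :=
  ∑' n : ℕ, ((2 * n + k).choose n : ℝ) * z ^ n

section ShiftedCentralBinomSeries

variable {z : ℝ}

theorem choose_two_mul_add_mul_pow_le (hz : 0 ≤ z) (k n : ℕ) :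
    ((2 * n + k).choose n : ℝ) * z ^ n ≤ 2 ^ k * (4 * z) ^ n := by
  calc ((2 * n + k).choose n : ℝ) * z ^ n ≤ 2 ^ (2 * n + k) * z ^ n := by
        gcongr; exact_mod_cast Nat.choose_le_two_pow _ _
    _ = 2 ^ k * (4 * z) ^ n := by rw [pow_add, pow_mul, mul_pow]; norm_num; ring

theorem summable_choose_two_mul_add_mul_pow (hz0 : 0 ≤ z) (hz : z < 1 / 4) (k : ℕ) :
    Summable fun n : ℕ => ((2 * n + k).choose n : ℝ) * z ^ n :=
  .of_nonneg_of_le (fun n => by positivity) (choose_two_mul_add_mul_pow_le hz0 k)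
    ((summable_geometric_of_lt_one (by positivity) (by linarith)).mul_left _)

theorem shiftedCentralBinomSeries_le (hz0 : 0 ≤ z) (hz : z < 1 / 4) (k : ℕ) :
    shiftedCentralBinomSeries k z ≤ (1 - 4 * z)⁻¹ * 2 ^ k := by
  have hgeom := summable_geometric_of_lt_one (by positivity : 0 ≤ 4 * z) (by linarith)
  calc shiftedCentralBinomSeries k z ≤ ∑' n : ℕ, 2 ^ k * (4 * z) ^ n :=
        (summable_choose_two_mul_add_mul_pow hz0 hz k).tsum_le_tsum
          (choose_two_mul_add_mul_pow_le hz0 k) (hgeom.mul_left _)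
    _ = (1 - 4 * z)⁻¹ * 2 ^ k := by
        rw [tsum_mul_left, tsum_geometric_of_lt_one (by positivity) (by linarith), mul_comm]

theorem shiftedCentralBinomSeries_succ (hz0 : 0 ≤ z) (hz : z < 1 / 4) (k : ℕ) :
    shiftedCentralBinomSeries (k + 1) z =
      shiftedCentralBinomSeries k z + z * shiftedCentralBinomSeries (k + 2) z := by
  have hs := summable_choose_two_mul_add_mul_pow hz0 hz
  unfold shiftedCentralBinomSeries
  rw [(hs (k + 1)).tsum_eq_zero_add, (hs k).tsum_eq_zero_add, ← tsum_mul_left, add_assoc,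
    ← ((summable_nat_add_iff 1).2 (hs k)).tsum_add ((hs (k + 2)).mul_left z)]
  congr 1
  · simp
  refine tsum_congr fun n => ?_
  rw [show 2 * (n + 1) + (k + 1) = (2 * n + k + 2) + 1 by ring, Nat.choose_succ_succ',
    show 2 * (n + 1) + k = 2 * n + k + 2 by ring, show 2 * n + (k + 2) = 2 * n + k + 2 by ring]
  push_cast
  ring

theorem shiftedCentralBinomSeries_zero (hz0 : 0 ≤ z) (hz : z < 1 / 4) :
    shiftedCentralBinomSeries 0 z = 1 + 2 * z * shiftedCentralBinomSeries 1 z := by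
  unfold shiftedCentralBinomSeries
  rw [(summable_choose_two_mul_add_mul_pow hz0 hz 0).tsum_eq_zero_add, ← tsum_mul_left]
  congr 1
  · simp
  refine tsum_congr fun n => ?_
  rw [show 2 * (n + 1) + 0 = (2 * n + 1) + 1 by ring, Nat.choose_succ_succ',
    Nat.choose_symm_half]
  push_cast
  ring

theorem shiftedCentralBinomSeries_div_one_add_sq {x : ℝ} (hx0 : 0 < x) (hx1 : x < 1)
    (k : ℕ) :
    shiftedCentralBinomSeries k (x / (1 + x) ^ 2) = (1 + x) ^ (k + 1) / (1 - x) := by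
  set z := x / (1 + x) ^ 2
  have hz0 : 0 ≤ z := by positivity
  have hz : z < 1 / 4 := by
    rw [div_lt_iff₀ (by positivity)]
    nlinarith [sq_pos_of_pos (sub_pos.2 hx1)]
  have hpow : ∀ k,
      shiftedCentralBinomSeries k z = (1 + x) ^ k * shiftedCentralBinomSeries 0 z := by
    refine eq_pow_mul_of_linear_recurrence (R := (1 + x) / x) (b := 2) (C := (1 - 4 * z)⁻¹)
      zero_le_two ?_ (fun k => ?_) (fun k => ?_)
    · rw [lt_div_iff₀ hx0]; linarith
    · have hz' : z ≠ 0 := by positivity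
      rw [show (1 + x) + (1 + x) / x = z⁻¹ by simp only [z]; field_simp; ring,
        show (1 + x) * ((1 + x) / x) = z⁻¹ by simp only [z]; field_simp,
        shiftedCentralBinomSeries_succ hz0 hz k]
      field_simp
      ring
    · rw [abs_of_nonneg (tsum_nonneg fun n => by positivity)]
      exact shiftedCentralBinomSeries_le hz0 hz k
  have h0 := shiftedCentralBinomSeries_zero hz0 hz
  rw [hpow 1] at h0
  have : shiftedCentralBinomSeries 0 z = (1 + x) / (1 - x) := by
    rw [eq_div_iff (by linarith)]
    simp only [z] at h0
    field_simp at h0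
    linear_combination h0
  rw [hpow k, this]
  ring

end ShiftedCentralBinomSeries

theorem integral_pow_mul_exp_neg_mul {s : ℝ} (hs : 0 < s) (M : ℕ) :
    ∫ t in Ioi (0 : ℝ), t ^ M * exp (-(s * t)) = M ! / s ^ (M + 1) := by
  have h := integral_rpow_mul_exp_neg_mul_Ioi (by positivity : (0 : ℝ) < M + 1) hs
  simp only [add_sub_cancel_right, rpow_natCast, Gamma_nat_eq_factorial] at h
  rw [h, ← Nat.cast_add_one, rpow_natCast, div_pow, one_pow]
  ring

theorem integrableOn_pow_mul_exp_neg_mul {s : ℝ} (hs : 0 < s) (M : ℕ) :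
    IntegrableOn (fun t : ℝ => t ^ M * exp (-(s * t))) (Ioi 0) :=
  Integrable.of_integral_ne_zero (by rw [integral_pow_mul_exp_neg_mul hs]; positivity)

theorem integral_exp_neg_mul_besselI_eq_series {c s : ℝ} (hc : 0 ≤ c) (hcs : 2 * c < s)
    (k : ℕ) :
    ∫ t in Ioi (0 : ℝ), exp (-(s * t)) * besselI k (2 * c * t) =
      c ^ k / s ^ (k + 1) * shiftedCentralBinomSeries k ((c / s) ^ 2) := by
  have hs : 0 < s := by linarith
  set F : ℕ → ℝ → ℝ := fun n t =>
    c ^ (2 * n + k) / (n ! * (n + k)! : ℝ) * (t ^ (2 * n + k) * exp (-(s * t)))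
  have hF_int : ∀ n, Integrable (F n) (volume.restrict (Ioi 0)) := fun n =>
    (integrableOn_pow_mul_exp_neg_mul hs _).const_mul _
  have hF_integral : ∀ n, ∫ t in Ioi (0 : ℝ), F n t =
      c ^ k / s ^ (k + 1) * (((2 * n + k).choose n : ℝ) * ((c / s) ^ 2) ^ n) := by
    intro n
    have hfac : ((2 * n + k)! : ℝ) = (2 * n + k).choose n * n ! * (n + k)! := by
      rw [← Nat.choose_mul_factorial_mul_factorial (by omega : n ≤ 2 * n + k),
        show 2 * n + k - n = n + k by omega]
      push_cast
      ring
    rw [integral_const_mul, integral_pow_mul_exp_neg_mul hs, hfac]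
    simp only [div_pow, ← pow_mul]
    field_simp
    ring
  have hF_norm : ∀ n, ∫ t in Ioi (0 : ℝ), ‖F n t‖ = ∫ t in Ioi (0 : ℝ), F n t :=
    fun n => setIntegral_congr_fun measurableSet_Ioi fun t (ht : 0 < t) => by
      rw [norm_of_nonneg (by positivity)]
  have hz : (c / s) ^ 2 < 1 / 4 := by rw [div_pow, div_lt_iff₀ (by positivity)]; nlinarith
  have hsum := hasSum_integral_of_summable_integral_norm hF_int <| by
    simp only [hF_norm, hF_integral]
    exact (summable_choose_two_mul_add_mul_pow (by positivity) hz k).mul_left _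
  rw [shiftedCentralBinomSeries, ← tsum_mul_left, ← (funext hF_integral), hsum.tsum_eq]
  refine setIntegral_congr_fun measurableSet_Ioi fun t _ => ?_
  rw [besselI, ← tsum_mul_left]
  refine tsum_congr fun n => ?_
  simp only [F]
  rw [show 2 * c * t / 2 = c * t by ring, mul_pow]
  ring

theorem integral_exp_neg_mul_besselI_eq {c u : ℝ} (hc : 0 < c) (hu : 0 < u) (hcu : c * u < 1)
    (k : ℕ) :
    ∫ t in Ioi (0 : ℝ), exp (-((c ^ 2 * u + 1 / u) * t)) * besselI k (2 * c * t) =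
      c ^ k * u ^ (k + 1) / (1 - (c * u) ^ 2) := by
  have hx1 : (c * u) ^ 2 < 1 := by nlinarith [mul_pos hc hu]
  have hcs : 2 * c < c ^ 2 * u + 1 / u := by
    rw [← sub_pos, show c ^ 2 * u + 1 / u - 2 * c = (1 - c * u) ^ 2 / u by field_simp; ring]
    exact div_pos (pow_pos (by linarith) 2) hu
  have hs : c ^ 2 * u + 1 / u = (1 + (c * u) ^ 2) / u := by field_simp; ring
  have hz : (c / (c ^ 2 * u + 1 / u)) ^ 2 = (c * u) ^ 2 / (1 + (c * u) ^ 2) ^ 2 := by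
    rw [hs]; field_simp
  rw [integral_exp_neg_mul_besselI_eq_series hc.le hcs, hz,
    shiftedCentralBinomSeries_div_one_add_sq (by positivity) hx1, hs, div_pow]
  field_simp

theorem Gtransform_exp_neg_mul (q u : ℝ) (g : ℝ → ℝ) :
    Gtransform q (fun t => exp (-(q + 1) * t) * g t) u =
      (u ^ (-2 : ℤ) - q) * ∫ t in Ioi (0 : ℝ), exp (-((q * u + 1 / u) * t)) * g t := by
  rw [Gtransform]
  congr 2
  funext t
  rw [← mul_assoc, ← exp_add, ← exp_add]
  ring_nf

theorem Gtransform_heat_building_block (q : ℝ) (hq : 1 < q) (k : ℕ) (u : ℝ)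
    (hu0 : 0 < u) (hu : u < 1 / q) :
    Gtransform q
      (fun t => Real.exp (-(q + 1) * t) * q ^ (-(k : ℝ) / 2) * besselI k (2 * Real.sqrt q * t))
      u = u ^ ((k : ℤ) - 1) := by
  have hq0 : 0 < q := by linarith
  have hqu : q * u ^ 2 < 1 := by
    rw [lt_div_iff₀ hq0] at hu
    nlinarith
  have hsqrt_pow : q ^ (-(k : ℝ) / 2) * √q ^ k = 1 := by
    rw [sqrt_eq_rpow, ← rpow_natCast, ← rpow_mul hq0.le, ← rpow_add hq0,
      show -(k : ℝ) / 2 + 1 / 2 * k = 0 by ring, rpow_zero]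
  have hsqrt : √q * u < 1 := by
    rwa [← pow_lt_one_iff_of_nonneg (by positivity) two_ne_zero, mul_pow, sq_sqrt hq0.le]
  have hlaplace := integral_exp_neg_mul_besselI_eq (sqrt_pos.2 hq0) hu0 hsqrt k
  rw [mul_pow, sq_sqrt hq0.le] at hlaplace
  rw [funext fun t => mul_assoc (exp (-(q + 1) * t)) _ (besselI k (2 * √q * t)),
    Gtransform_exp_neg_mul]
  simp_rw [mul_left_comm (exp _) (q ^ (-(k : ℝ) / 2)), integral_const_mul]
  rw [hlaplace, ← mul_div_assoc, ← mul_assoc, hsqrt_pow, one_mul, zpow_sub₀ hu0.ne', zpow_neg,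
    zpow_natCast, zpow_one, zpow_ofNat]
  have hqu' : 1 - q * u ^ 2 ≠ 0 := (sub_pos.2 hqu).ne'
  rw [show (u ^ 2)⁻¹ - q = (1 - q * u ^ 2) / u ^ 2 by field_simp]
  field_simp
  ring
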